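/- Let X^L, Û^L be finite-alphabet random vectors of length L where, for each i, X̂_i is a deterministic function of (U, X^{i−1}) for a random variable U (the codetree) — i.e., X̂^i is a function of (U, X^{i−1}). Then I(X^L; U) ≥ Σ_{i=1}^L I(X_i; X̂^i | X^{i−1}), the right-hand side equaling the directed information I(X̂^L → X^L). -/

import Mathlib

/-
By the chain rule, `I(X^L; U) = ∑ᵢ I(X_i; U | X^{i-1})`; in terms of entropies this sum telescopes.
Since `X̂^i` is a function of `(U, X^{i-1})`, each summand dominates `I(X_i; X̂^i | X^{i-1})`:
conditional mutual information can only drop when an argument is replaced by a function of it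
and of the conditioning variable. That monotonicity is strong subadditivity of entropy, i.e.
Gibbs' inequality against the coupling under which two coordinates are independent given a third.
-/

open scoped Classical

/-- Shannon entropy (base 2) of a finitely supported distribution. -/
noncomputable def ent {α : Type*} [Fintype α] (p : α → ℝ) : ℝ :=
  -∑ x, p x * Real.logb 2 (p x)

/-- Distribution (pushforward of the probability mass function `μ`) of a random
variable `X` on a finite probability space. -/
noncomputable def dist {Ω α : Type*} [Fintype Ω] (μ : Ω → ℝ) (X : Ω → α) : α → ℝ :=
  fun a => ∑ ω, if X ω = a then μ ω else 0

/-- Entropy of a random variable. -/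
noncomputable def Hrv {Ω α : Type*} [Fintype Ω] [Fintype α] (μ : Ω → ℝ) (X : Ω → α) : ℝ :=
  ent (dist μ X)

/-- Mutual information `I(X;Y) = H(X) + H(Y) - H(X,Y)`. -/
noncomputable def mutInf {Ω α β : Type*} [Fintype Ω] [Fintype α] [Fintype β]
    (μ : Ω → ℝ) (X : Ω → α) (Y : Ω → β) : ℝ :=
  Hrv μ X + Hrv μ Y - Hrv μ (fun ω => (X ω, Y ω))

/-- Conditional entropy `H(X|Y) = H(X,Y) - H(Y)`. -/
noncomputable def condEnt {Ω α β : Type*} [Fintype Ω] [Fintype α] [Fintype β]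
    (μ : Ω → ℝ) (X : Ω → α) (Y : Ω → β) : ℝ :=
  Hrv μ (fun ω => (X ω, Y ω)) - Hrv μ Y

/-- Conditional mutual information
`I(X;Y|Z) = H(X,Z) + H(Y,Z) - H(X,Y,Z) - H(Z)`. -/
noncomputable def condMutInf {Ω α β γ : Type*} [Fintype Ω] [Fintype α] [Fintype β] [Fintype γ]
    (μ : Ω → ℝ) (X : Ω → α) (Y : Ω → β) (Z : Ω → γ) : ℝ :=
  Hrv μ (fun ω => (X ω, Z ω)) + Hrv μ (fun ω => (Y ω, Z ω)) -
    Hrv μ (fun ω => (X ω, Y ω, Z ω)) - Hrv μ Z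

/-- The length-`k` prefix `X^k` of a vector of random variables, padded with `default`. -/
def pref {Ω α : Type*} [Inhabited α] {L : ℕ} (X : Fin L → Ω → α) (k : ℕ) :
    Ω → (Fin L → α) := fun ω j => if (j : ℕ) < k then X j ω else default

section Distribution

variable {Ω α β γ : Type*} [Fintype Ω] (μ : Ω → ℝ)

lemma dist_apply_nonneg (hμ : ∀ ω, 0 ≤ μ ω) (X : Ω → α) (a : α) : 0 ≤ dist μ X a :=
  Finset.sum_nonneg fun ω _ => by split_ifs <;> simp [hμ ω]

lemma sum_dist_prod_fst [Fintype α] (X : Ω → α) (Y : Ω → β) (b : β) :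
    ∑ a, dist μ (fun ω => (X ω, Y ω)) (a, b) = dist μ Y b := by
  simp only [_root_.dist, Prod.mk.injEq, ite_and]
  rw [Finset.sum_comm]
  simp

lemma sum_dist_prod_mid [Fintype β] (X : Ω → α) (Y : Ω → β) (Z : Ω → γ) (a : α) (c : γ) :
    ∑ b, dist μ (fun ω => (X ω, Y ω, Z ω)) (a, b, c) = dist μ (fun ω => (X ω, Z ω)) (a, c) := by
  simp only [_root_.dist, Prod.mk.injEq, ite_and]
  rw [Finset.sum_comm]
  simp

-- `H(X)` is the `μ`-average of `-log₂ P(X = X ω)`, so it only depends on the partition of `Ω`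
-- into level sets of `X`.
lemma Hrv_eq_neg_sum [Fintype α] (X : Ω → α) :
    Hrv μ X = -∑ ω, μ ω * Real.logb 2 (dist μ X (X ω)) := by
  simp only [Hrv, ent, _root_.dist, Finset.sum_mul, ite_mul, zero_mul]
  rw [Finset.sum_comm]
  simp

lemma Hrv_congr [Fintype α] [Fintype β] {X : Ω → α} {Y : Ω → β}
    (h : ∀ ω ω', X ω' = X ω ↔ Y ω' = Y ω) : Hrv μ X = Hrv μ Y := by
  simp only [Hrv_eq_neg_sum, _root_.dist, h]

lemma Hrv_const [Fintype α] (hμ : ∑ ω, μ ω = 1) (c : α) : Hrv μ (fun _ => c) = 0 := by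
  simp [Hrv_eq_neg_sum, _root_.dist, hμ]

end Distribution

lemma mul_log_sub_log_le {p q : ℝ} (hp : 0 ≤ p) (hq : 0 ≤ q) (hpq : 0 < p → 0 < q) :
    p * (Real.log q - Real.log p) ≤ q - p := by
  rcases hp.eq_or_lt with rfl | hp
  · simpa using hq
  have hq := hpq hp
  calc p * (Real.log q - Real.log p) = p * Real.log (q / p) := by
        rw [Real.log_div hq.ne' hp.ne']
    _ ≤ p * (q / p - 1) := by gcongr; exact Real.log_le_sub_one_of_pos (by positivity)
    _ = q - p := by field_simp

lemma sum_mul_log_le_sum_mul_log {ι : Type*} [Fintype ι] {p q : ι → ℝ} (hp : ∀ i, 0 ≤ p i)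
    (hq : ∀ i, 0 ≤ q i) (hpq : ∀ i, 0 < p i → 0 < q i) (hsum : ∑ i, q i ≤ ∑ i, p i) :
    ∑ i, p i * Real.log (q i) ≤ ∑ i, p i * Real.log (p i) := by
  have := Finset.sum_le_sum fun i (_ : i ∈ Finset.univ) =>
    mul_log_sub_log_le (hp i) (hq i) (hpq i)
  simp only [mul_sub, Finset.sum_sub_distrib] at this
  linarith

section Marginals
variable {α β γ : Type*} [Fintype α] [Fintype β] [Fintype γ]

lemma sum_mul_log_marginals_le_sum_mul_log (p : α × β × γ → ℝ) (hp : ∀ x, 0 ≤ p x) :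
    let A := fun y : α × γ => ∑ b, p (y.1, b, y.2)
    let B := fun y : β × γ => ∑ a, p (a, y)
    let C := fun c : γ => ∑ a, ∑ b, p (a, b, c)
    ∑ x, p x * (Real.log (A (x.1, x.2.2)) + Real.log (B x.2) - Real.log (C x.2.2)) ≤
      ∑ x, p x * Real.log (p x) := by
  intro A B C
  have hA0 : ∀ y, 0 ≤ A y := fun y => Finset.sum_nonneg fun b _ => hp _
  have hB0 : ∀ y, 0 ≤ B y := fun y => Finset.sum_nonneg fun a _ => hp _
  have hC0 : ∀ c, 0 ≤ C c := fun c => Finset.sum_nonneg fun a _ => hA0 (a, c)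
  have hpos : ∀ x, 0 < p x → 0 < A (x.1, x.2.2) ∧ 0 < B x.2 ∧ 0 < C x.2.2 := fun x hx =>
    have hA := Finset.single_le_sum (f := fun b => p (x.1, b, x.2.2)) (fun b _ => hp _)
      (Finset.mem_univ x.2.1)
    have hB := Finset.single_le_sum (f := fun a => p (a, x.2)) (fun a _ => hp _)
      (Finset.mem_univ x.1)
    have hC := Finset.single_le_sum (f := fun a => A (a, x.2.2)) (fun a _ => hA0 _)
      (Finset.mem_univ x.1)
    ⟨by linarith, by linarith, by linarith⟩
  have hsumA : ∀ c, ∑ a, A (a, c) = C c := fun c => rfl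
  have hsumB : ∀ c, ∑ b, B (b, c) = C c := fun c => Finset.sum_comm
  have hsumC : ∑ c, C c = ∑ x, p x := by
    simp only [C, Fintype.sum_prod_type]
    exact Finset.sum_comm_cycle.symm
  clear_value A B C
  -- Gibbs against the law under which the first two coordinates are independent given the third
  have gibbs := sum_mul_log_le_sum_mul_log
    (q := fun x : α × β × γ => A (x.1, x.2.2) * B x.2 / C x.2.2) hp
    (fun x => div_nonneg (mul_nonneg (hA0 _) (hB0 _)) (hC0 _))
    (fun x hx => by
      obtain ⟨hA, hB, hC⟩ := hpos x hx
      positivity)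
    (Eq.le <| by
      calc ∑ x : α × β × γ, A (x.1, x.2.2) * B x.2 / C x.2.2
          = ∑ c, ∑ a, ∑ b, A (a, c) * B (b, c) / C c := by
            simp only [Fintype.sum_prod_type]
            exact Finset.sum_comm_cycle
        _ = ∑ c, C c * C c / C c := by
            simp only [← Finset.sum_div, ← Finset.mul_sum, ← Finset.sum_mul, hsumA, hsumB]
        _ = ∑ x, p x := by
            rw [← hsumC]
            exact Finset.sum_congr rfl fun c _ => mul_self_div_self _)
  refine le_of_eq_of_le (Finset.sum_congr rfl fun x _ => ?_) gibbs
  rcases (hp x).eq_or_lt with h0 | hx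
  · simp [← h0]
  obtain ⟨hA, hB, hC⟩ := hpos x hx
  rw [Real.log_div (by positivity) hC.ne', Real.log_mul hA.ne' hB.ne']

lemma sum_mul_log_marginals_le (p : α × β × γ → ℝ) (hp : ∀ x, 0 ≤ p x) :
    let A := fun y : α × γ => ∑ b, p (y.1, b, y.2)
    let B := fun y : β × γ => ∑ a, p (a, y)
    let C := fun c : γ => ∑ a, ∑ b, p (a, b, c)
    ∑ y, A y * Real.log (A y) + ∑ y, B y * Real.log (B y) ≤
      ∑ x, p x * Real.log (p x) + ∑ c, C c * Real.log (C c) := by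
  intro A B C
  have key := sum_mul_log_marginals_le_sum_mul_log p hp
  simp only [mul_add, mul_sub, Finset.sum_add_distrib, Finset.sum_sub_distrib] at key
  have regroupA : ∑ x, p x * Real.log (A (x.1, x.2.2)) = ∑ y, A y * Real.log (A y) := by
    simp only [A, Fintype.sum_prod_type, Finset.sum_mul]
    exact Finset.sum_congr rfl fun a _ => Finset.sum_comm
  have regroupB : ∑ x, p x * Real.log (B x.2) = ∑ y, B y * Real.log (B y) := by
    simp only [B, Fintype.sum_prod_type, Finset.sum_mul]
    rw [Finset.sum_comm]
    exact Finset.sum_congr rfl fun b _ => Finset.sum_comm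
  have regroupC : ∑ x, p x * Real.log (C x.2.2) = ∑ c, C c * Real.log (C c) := by
    simp only [C, Fintype.sum_prod_type, Finset.sum_mul]
    exact Finset.sum_comm_cycle
  linarith

end Marginals

lemma ent_eq_neg_sum_mul_log_div {α : Type*} [Fintype α] (p : α → ℝ) :
    ent p = -(∑ x, p x * Real.log (p x)) / Real.log 2 := by
  simp only [ent, Real.logb, neg_div, Finset.sum_div, mul_div_assoc]

section StrongSubadditivity
variable {Ω α β γ : Type*} [Fintype Ω] [Fintype α] [Fintype β] [Fintype γ] (μ : Ω → ℝ)

lemma Hrv_triple_add_Hrv_le (hμ : ∀ ω, 0 ≤ μ ω) (S : Ω → α) (T : Ω → β) (V : Ω → γ) :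
    Hrv μ (fun ω => (S ω, T ω, V ω)) + Hrv μ V ≤
      Hrv μ (fun ω => (S ω, V ω)) + Hrv μ (fun ω => (T ω, V ω)) := by
  set q := dist μ (fun ω => (S ω, T ω, V ω))
  have hSV : dist μ (fun ω => (S ω, V ω)) = fun y => ∑ b, q (y.1, b, y.2) :=
    funext fun y => (sum_dist_prod_mid μ S T V y.1 y.2).symm
  have hTV : dist μ (fun ω => (T ω, V ω)) = fun y => ∑ a, q (a, y) :=
    funext fun y => (sum_dist_prod_fst μ S _ y).symm
  have hV : dist μ V = fun c => ∑ a, ∑ b, q (a, b, c) := by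
    funext c
    simp only [q, sum_dist_prod_mid, sum_dist_prod_fst]
  have key := sum_mul_log_marginals_le q (dist_apply_nonneg μ hμ _)
  simp only [Hrv, ent_eq_neg_sum_mul_log_div, hSV, hTV, hV]
  have hlog2 : 0 < Real.log 2 := Real.log_pos one_lt_two
  rw [← add_div, ← add_div]
  exact div_le_div_of_nonneg_right (by linarith) hlog2.le

lemma condMutInf_le_of_determined {β' : Type*} [Fintype β'] (hμ : ∀ ω, 0 ≤ μ ω) (X : Ω → α)
    {Y : Ω → β} (Y' : Ω → β') (Z : Ω → γ) (h : ∀ ω ω', Y' ω' = Y' ω → Z ω' = Z ω → Y ω' = Y ω) :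
    condMutInf μ X Y Z ≤ condMutInf μ X Y' Z := by
  have key := Hrv_triple_add_Hrv_le μ hμ X Y' (fun ω => (Y ω, Z ω))
  have hXY'YZ : Hrv μ (fun ω => (X ω, Y' ω, Y ω, Z ω)) = Hrv μ (fun ω => (X ω, Y' ω, Z ω)) :=
    Hrv_congr μ fun ω ω' => by
      simp only [Prod.mk.injEq]
      exact ⟨fun h' => ⟨h'.1, h'.2.1, h'.2.2.2⟩,
        fun h' => ⟨h'.1, h'.2.1, h ω ω' h'.2.1 h'.2.2, h'.2.2⟩⟩
  have hY'YZ : Hrv μ (fun ω => (Y' ω, Y ω, Z ω)) = Hrv μ (fun ω => (Y' ω, Z ω)) :=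
    Hrv_congr μ fun ω ω' => by
      simp only [Prod.mk.injEq]
      exact ⟨fun h' => ⟨h'.1, h'.2.2⟩, fun h' => ⟨h'.1, h ω ω' h'.1 h'.2, h'.2⟩⟩
  simp only [condMutInf]
  linarith

end StrongSubadditivity

section Prefix
variable {Ω α : Type*} [Inhabited α] {L : ℕ} (X : Fin L → Ω → α)

lemma pref_zero : pref X 0 = fun _ _ => default := by
  funext ω j
  simp [pref]

lemma pref_length : pref X L = fun ω j => X j ω := by
  funext ω j
  simp [pref, j.isLt]

lemma pref_eq_pref_of_le {m k : ℕ} (hmk : m ≤ k) {ω ω' : Ω} (h : pref X k ω' = pref X k ω) :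
    pref X m ω' = pref X m ω := by
  funext j
  have hj := congrFun h j
  simp only [pref] at hj ⊢
  split_ifs with hjm
  · simpa [show (j : ℕ) < k by omega] using hj
  · rfl

lemma pref_succ_eq_iff (i : Fin L) (ω ω' : Ω) :
    pref X (i + 1) ω' = pref X (i + 1) ω ↔ X i ω' = X i ω ∧ pref X i ω' = pref X i ω := by
  refine ⟨fun h => ⟨by simpa [pref] using congrFun h i, pref_eq_pref_of_le X (by omega) h⟩, ?_⟩
  rintro ⟨hi, hpre⟩
  funext j
  have hj := congrFun hpre j
  simp only [pref] at hj ⊢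
  rcases lt_trichotomy (j : ℕ) i with hji | hji | hji
  · simpa [hji, show (j : ℕ) < i + 1 by omega] using hj
  · rw [if_pos (by omega), if_pos (by omega), Fin.ext hji, hi]
  · rw [if_neg (by omega), if_neg (by omega)]

lemma pref_succ_eq_of_causal {β γ : Type*} [Inhabited γ] (U : Ω → β) (Xhat : Fin L → Ω → γ)
    (f : Fin L → β × (Fin L → α) → γ) (hf : ∀ j ω, Xhat j ω = f j (U ω, pref X j ω)) (k : ℕ)
    {ω ω' : Ω} (hU : U ω' = U ω) (hX : pref X k ω' = pref X k ω) :
    pref Xhat (k + 1) ω' = pref Xhat (k + 1) ω := by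
  funext j
  simp only [pref]
  split_ifs with hj
  · rw [hf, hf, hU, pref_eq_pref_of_le X (by omega) hX]
  · rfl

end Prefix

section ChainRule
variable {Ω α β : Type*} [Fintype Ω] [Fintype α] [Fintype β] [Inhabited α] {L : ℕ}
  (μ : Ω → ℝ) (X : Fin L → Ω → α) (U : Ω → β)

lemma condMutInf_pref_eq (i : Fin L) :
    condMutInf μ (X i) U (pref X i) =
      Hrv μ (pref X (i + 1)) - Hrv μ (pref X i) +
        (Hrv μ (fun ω => (U ω, pref X i ω)) - Hrv μ (fun ω => (U ω, pref X (i + 1) ω))) := by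
  have hX : Hrv μ (fun ω => (X i ω, pref X i ω)) = Hrv μ (pref X (i + 1)) :=
    Hrv_congr μ fun ω ω' => by rw [Prod.mk.injEq, pref_succ_eq_iff]
  have hXU : Hrv μ (fun ω => (X i ω, U ω, pref X i ω)) =
      Hrv μ (fun ω => (U ω, pref X (i + 1) ω)) :=
    Hrv_congr μ fun ω ω' => by
      simp only [Prod.mk.injEq, pref_succ_eq_iff]
      tauto
  rw [condMutInf, hX, hXU]
  ring

lemma mutInf_eq_sum_condMutInf_pref (hμ : ∑ ω, μ ω = 1) :
    mutInf μ (fun ω j => X j ω) U = ∑ i : Fin L, condMutInf μ (X i) U (pref X i) := by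
  have hX0 : Hrv μ (pref X 0) = 0 := by
    rw [pref_zero]
    exact Hrv_const μ hμ _
  have hU0 : Hrv μ (fun ω => (U ω, pref X 0 ω)) = Hrv μ U :=
    Hrv_congr μ fun ω ω' => by simp [pref_zero]
  have hUL : Hrv μ (fun ω => (U ω, pref X L ω)) = Hrv μ (fun ω => ((fun j => X j ω), U ω)) :=
    Hrv_congr μ fun ω ω' => by simp only [pref_length, Prod.mk.injEq, and_comm]
  simp only [condMutInf_pref_eq, Finset.sum_add_distrib]
  rw [Fin.sum_univ_eq_sum_range (fun k => Hrv μ (pref X (k + 1)) - Hrv μ (pref X k)),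
    Fin.sum_univ_eq_sum_range (fun k => Hrv μ (fun ω => (U ω, pref X k ω)) -
      Hrv μ (fun ω => (U ω, pref X (k + 1) ω))),
    Finset.sum_range_sub (fun k => Hrv μ (pref X k)),
    Finset.sum_range_sub' (fun k => Hrv μ (fun ω => (U ω, pref X k ω))),
    hX0, hU0, hUL, pref_length, mutInf]
  ring

end ChainRule

/-- If each estimate `X̂_i` is a deterministic function of the codetree `U` and the past
source samples `X^{i-1}`, then `I(X^L; U) ≥ ∑_i I(X_i; X̂^i | X^{i-1})`, the right-hand
side being the directed information `I(X̂^L → X^L)`. -/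
theorem stmt7 {Ω α β γ : Type*} [Fintype Ω] [Fintype α] [Fintype β] [Fintype γ]
    [Inhabited α] [Inhabited γ] (L : ℕ)
    (μ : Ω → ℝ) (hμ0 : ∀ ω, 0 ≤ μ ω) (hμ1 : ∑ ω, μ ω = 1)
    (X : Fin L → Ω → α) (U : Ω → β) (Xhat : Fin L → Ω → γ)
    (hdet : ∀ i : Fin L, ∃ f : β × (Fin L → α) → γ,
      ∀ ω, Xhat i ω = f (U ω, pref X (i : ℕ) ω)) :
    mutInf μ (fun ω => fun j => X j ω) U ≥
      ∑ i : Fin L, condMutInf μ (X i) (pref Xhat ((i : ℕ) + 1)) (pref X (i : ℕ)) := by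
  choose f hf using hdet
  rw [ge_iff_le, mutInf_eq_sum_condMutInf_pref μ X U hμ1]
  exact Finset.sum_le_sum fun i _ =>
    condMutInf_le_of_determined μ hμ0 (X i) U (pref X i) fun ω ω' hU hX =>
      pref_succ_eq_of_causal X U Xhat f hf i hU hX
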